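/- Let (X,d) be a compact metric space with topological dimension dim X ≤ n, and let F_1, …, F_{n+2} be pairwise disjoint closed subsets of X. Then the set {f ∈ C(X, ℝ^{n+1}) | f(F_1) ∩ f(F_2) ∩ ⋯ ∩ f(F_{n+2}) = ∅} is open and dense in C(X, ℝ^{n+1}) with respect to the uniform metric. -/

import Mathlib

open Filter Topology Pointwise ENNReal
open scoped ENat

noncomputable section

/-- The diameter of a set with respect to a distance function, valued in `ℝ≥0∞`. -/
def setDiam {X : Type*} (d : X → X → ℝ) (A : Set X) : ℝ≥0∞ :=
  ⨆ x ∈ A, ⨆ y ∈ A, ENNReal.ofReal (d x y)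

/-- `coverNum d A ε` is the minimal number of relatively open subsets of `A` of
`d`-diameter `< ε` needed to cover `A` (it is `0` if `A = ∅`). -/
def coverNum {X : Type*} [TopologicalSpace X] (d : X → X → ℝ) (A : Set X) (ε : ℝ) : ℕ :=
  sInf {n : ℕ | ∃ U : Fin n → Set X, (∀ i, IsOpen (U i)) ∧ A ⊆ (⋃ i, U i) ∧
    ∀ i, setDiam d (U i ∩ A) < ENNReal.ofReal ε}

/-- The dynamical (Bowen) metric `d_N(x,y) = max_{0 ≤ n < N} d(Tⁿx, Tⁿy)`. -/
def dynDist {X : Type*} (T : X → X) (d : X → X → ℝ) (N : ℕ) (x y : X) : ℝ :=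
  ⨆ n : Fin N, d (T^[(n : ℕ)] x) (T^[(n : ℕ)] y)

/-- `widimEps X d ε` is the minimal `n` such that there is a finite simplicial complex of
dimension (at most) `n` and an `ε`-embedding from `X` into it. -/
def widimEps (X : Type*) [TopologicalSpace X] (d : X → X → ℝ) (ε : ℝ) : ℕ∞ :=
  sInf {n : ℕ∞ | ∃ m : ℕ, n = (m : ℕ∞) ∧
    ∃ (k : ℕ) (K : Geometry.SimplicialComplex ℝ (Fin k → ℝ)), K.faces.Finite ∧
      (∀ s ∈ K.faces, s.card ≤ m + 1) ∧
      ∃ f : X → K.space, Continuous f ∧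
        ∀ p : K.space, setDiam d (f ⁻¹' {p}) < ENNReal.ofReal ε}

/-- The topological dimension `dim X = lim_{ε → 0} widim_ε(X, d)`. -/
def topDim (X : Type*) [TopologicalSpace X] (d : X → X → ℝ) : ℕ∞ :=
  limsup (fun ε : ℝ => widimEps X d ε) (𝓝[>] 0)

/-- The mean dimension `mdim(X,T) = lim_{ε→0} lim_{N→∞} widim_ε(X, d_N)/N`. -/
def meanDim (X : Type*) [TopologicalSpace X] (T : X → X) (d : X → X → ℝ) : EReal :=
  limsup (fun ε : ℝ =>
    limsup (fun N : ℕ =>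
      (((widimEps X (dynDist T d N) ε : ℕ∞) : ℝ≥0∞) : EReal) / (N : EReal)) atTop)
    (𝓝[>] 0)

/-- `sup_{y ∈ Y} log #(π⁻¹(y), d_N, ε)`. -/
def fiberLogCover {X Y : Type*} [TopologicalSpace X] (T : X → X) (d : X → X → ℝ)
    (π : X → Y) (ε : ℝ) (N : ℕ) : EReal :=
  ⨆ y : Y, ((Real.log (coverNum (dynDist T d N) (π ⁻¹' {y}) ε) : ℝ) : EReal)

/-- The lower conditional metric mean dimension `lmdimm(π, T, d)`. -/
def condMetricMeanDim {X Y : Type*} [TopologicalSpace X] (T : X → X) (d : X → X → ℝ)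
    (π : X → Y) : EReal :=
  liminf (fun ε : ℝ =>
    limsup (fun N : ℕ =>
      fiberLogCover T d π ε N / ((N : EReal) * ((Real.log (1/ε) : ℝ) : EReal))) atTop)
    (𝓝[>] 0)

/-- The topological conditional entropy `h_top(π, T)`. -/
def condEntropy {X Y : Type*} [TopologicalSpace X] (T : X → X) (d : X → X → ℝ)
    (π : X → Y) : EReal :=
  limsup (fun ε : ℝ =>
    limsup (fun N : ℕ => fiberLogCover T d π ε N / (N : EReal)) atTop) (𝓝[>] 0)

/-- The topological entropy `h_top(X, T)`. -/
def topEntropy (X : Type*) [TopologicalSpace X] (T : X → X) (d : X → X → ℝ) : EReal :=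
  limsup (fun ε : ℝ =>
    limsup (fun N : ℕ =>
      ((Real.log (coverNum (dynDist T d N) Set.univ ε) : ℝ) : EReal) / (N : EReal)) atTop)
    (𝓝[>] 0)

/-- The lower metric mean dimension `lmdimm(X, T, d)`. -/
def metricMeanDim (X : Type*) [TopologicalSpace X] (T : X → X) (d : X → X → ℝ) : EReal :=
  liminf (fun ε : ℝ =>
    limsup (fun N : ℕ =>
      ((Real.log (coverNum (dynDist T d N) Set.univ ε) : ℝ) : EReal) /
        ((N : EReal) * ((Real.log (1/ε) : ℝ) : EReal))) atTop)
    (𝓝[>] 0)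

/-- The cube `[0,1]^a ⊆ ℝ^a`, where `ℝ^a` carries the max-norm. -/
abbrev Cube (a : ℕ) : Set (Fin a → ℝ) := Set.Icc 0 1

/-- The full shift `([0,1]^a)^ℤ`. -/
abbrev FullShift (a : ℕ) := ℤ → Cube a

/-- The shift map `σ` on `([0,1]^a)^ℤ`. -/
def shiftMap (a : ℕ) : FullShift a → FullShift a := fun x n => x (n + 1)

/-- The metric `D((xₙ), (yₙ)) = Σ_{n ∈ ℤ} 2^{-|n|} ‖xₙ - yₙ‖_∞` on the full shift. -/
def shiftDist (a : ℕ) (x y : FullShift a) : ℝ :=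
  ∑' n : ℤ, (2 : ℝ) ^ (-|n|) * ‖(x n : Fin a → ℝ) - (y n : Fin a → ℝ)‖


/-- A simplicial (i.e. face-wise affine) map on a simplicial complex `K`. -/
def IsSimplicialMap {E F : Type*} [AddCommGroup E] [Module ℝ E] [AddCommGroup F] [Module ℝ F]
    (K : Geometry.SimplicialComplex ℝ E) (g : E → F) : Prop :=
  ∀ s ∈ K.faces, ∀ w : E → ℝ, (∀ v ∈ s, 0 ≤ w v) → (∑ v ∈ s, w v) = 1 →
    g (∑ v ∈ s, w v • v) = ∑ v ∈ s, w v • g v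

/-- The projection `[0,1]^a → [0,1]^b` onto the first `b` coordinates (for `b ≤ a`). -/
def projCube {a b : ℕ} (h : b ≤ a) (x : Cube a) : Cube b :=
  ⟨fun i => (x : Fin a → ℝ) (Fin.castLE h i),
    ⟨fun i => x.2.1 (Fin.castLE h i), fun i => x.2.2 (Fin.castLE h i)⟩⟩

/-!
The set is open because `⋂ i, f '' F i = ∅` says that `x ↦ (f (x i))ᵢ` is nowhere constant on
the compact set `∏ i, F i`, which survives small uniform perturbations of `f`.

For density, `dim X ≤ n` provides `ε`-embeddings of `X` into finite `n`-dimensional simplicial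
complexes. Composing with a linear map to `ℝⁿ` that is injective on every face gives a map to
`ℝⁿ` whose fibers meet boundedly many fibers of the embedding; cutting the preimages of a cover
of `ℝⁿ` by `n + 1` families of disjoint small cubes along these fibers yields open covers of `X`
of arbitrarily small mesh in which every point lies in at most `n + 1` members. Given `f`, take
such a cover finer than the modulus of continuity of `f` and than the gaps between the `F i`, a
partition of unity `φ` subordinate to it, and points `y_V` close to `f(V)` in general position.
Then `g = ∑ V, φ_V • y_V` is close to `f`, and a common point `g(a₀) = ⋯ = g(a_{n+1})` with
`aᵢ ∈ F i` would lie in the affine hulls of the `n + 2` disjoint families `{y_V | φ_V(aᵢ) ≠ 0}`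
of at most `n + 1` points each, which general position excludes.
-/

open Metric

universe u

theorem iInter_image_eq_empty_iff {ι X Y : Type*} [Nonempty ι] (f : X → Y) (F : ι → Set X) :
    ⋂ i, f '' F i = ∅ ↔ ∀ x ∈ Set.univ.pi F, ∃ i j, f (x i) ≠ f (x j) := by
  constructor
  · intro h x hx
    by_contra! hall
    obtain ⟨i₀⟩ := ‹Nonempty ι›
    refine Set.eq_empty_iff_forall_notMem.mp h (f (x i₀)) (Set.mem_iInter.mpr fun i => ?_)
    exact ⟨x i, hx i trivial, hall i i₀⟩
  · intro h
    refine Set.eq_empty_iff_forall_notMem.mpr fun p hp => ?_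
    choose x hxF hxp using Set.mem_iInter.mp hp
    obtain ⟨i, j, hij⟩ := h x fun i _ => hxF i
    exact hij ((hxp i).trans (hxp j).symm)

theorem isOpen_setOf_iInter_image_eq_empty {ι X Y : Type*} [Nonempty ι]
    [TopologicalSpace X] [LocallyCompactSpace X] [TopologicalSpace Y] [T2Space Y]
    {F : ι → Set X} (hF : ∀ i, IsCompact (F i)) :
    IsOpen {f : C(X, Y) | ⋂ i, f '' F i = ∅} := by
  simp only [iInter_image_eq_empty_iff]
  refine isOpen_iff_mem_nhds.mpr fun f hf => ?_
  refine (isCompact_univ_pi hF).eventually_forall_of_forall_eventually fun x hx => ?_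
  obtain ⟨i, j, hij⟩ := hf x hx
  have hcont : ∀ k, Continuous fun z : C(X, Y) × (ι → X) => z.1 (z.2 k) := fun k =>
    continuous_eval.comp (continuous_fst.prodMk ((continuous_apply k).comp continuous_snd))
  exact (((hcont i).continuousAt.ne_iff_eventually_ne (hcont j).continuousAt).mp hij).mono
    fun z hz => ⟨i, j, hz⟩

theorem lt_of_setDiam_lt {X : Type*} {d : X → X → ℝ} {A : Set X} {ε : ℝ}
    (h : setDiam d A < ENNReal.ofReal ε) {x y : X} (hx : x ∈ A) (hy : y ∈ A) : d x y < ε := by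
  have hle : ENNReal.ofReal (d x y) ≤ setDiam d A :=
    le_iSup₂_of_le x hx (le_iSup₂_of_le y hy le_rfl)
  exact (ENNReal.ofReal_lt_ofReal_iff'.mp (hle.trans_lt h)).1

section WidthDimension

variable {X : Type*} [TopologicalSpace X] {d : X → X → ℝ}

theorem exists_simplicialComplex_of_widimEps_le {ε : ℝ} {n : ℕ} (h : widimEps X d ε ≤ n) :
    ∃ (k : ℕ) (K : Geometry.SimplicialComplex ℝ (Fin k → ℝ)) (f : X → K.space),
      K.faces.Finite ∧ (∀ s ∈ K.faces, s.card ≤ n + 1) ∧ Continuous f ∧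
        ∀ x y, f x = f y → d x y < ε := by
  unfold widimEps at h
  set S := {n : ℕ∞ | ∃ m : ℕ, n = (m : ℕ∞) ∧
    ∃ (k : ℕ) (K : Geometry.SimplicialComplex ℝ (Fin k → ℝ)), K.faces.Finite ∧
      (∀ s ∈ K.faces, s.card ≤ m + 1) ∧
      ∃ f : X → K.space, Continuous f ∧
        ∀ p : K.space, setDiam d (f ⁻¹' {p}) < ENNReal.ofReal ε}
  have hS : S.Nonempty := by
    by_contra hS
    rw [Set.not_nonempty_iff_eq_empty.mp hS, sInf_empty] at h
    exact ENat.top_ne_natCast n (le_antisymm h le_top)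
  obtain ⟨m, hm, k, K, hfin, hcard, f, hf, hdiam⟩ := csInf_mem hS
  have hmn : m ≤ n := by exact_mod_cast hm ▸ h
  exact ⟨k, K, f, hfin, fun s hs => (hcard s hs).trans (by omega), hf,
    fun x y hxy => lt_of_setDiam_lt (hdiam (f x)) rfl hxy.symm⟩

theorem exists_simplicialComplex_of_topDim_le {n : ℕ} (h : topDim X d ≤ n) {ε : ℝ} (hε : 0 < ε) :
    ∃ (k : ℕ) (K : Geometry.SimplicialComplex ℝ (Fin k → ℝ)) (f : X → K.space),
      K.faces.Finite ∧ (∀ s ∈ K.faces, s.card ≤ n + 1) ∧ Continuous f ∧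
        ∀ x y, f x = f y → d x y < ε := by
  have hlt : topDim X d < (n : ℕ∞) + 1 :=
    h.trans_lt ((ENat.lt_add_one_iff (ENat.natCast_ne_top n)).mpr le_rfl)
  obtain ⟨ε', hε', hε'ε⟩ :=
    ((eventually_lt_of_limsup_lt hlt).and (Ioo_mem_nhdsGT hε)).exists
  obtain ⟨k, K, f, hfin, hcard, hf, hfib⟩ := exists_simplicialComplex_of_widimEps_le
    ((ENat.lt_add_one_iff (ENat.natCast_ne_top n)).mp hε')
  exact ⟨k, K, f, hfin, hcard, hf, fun x y hxy => (hfib x y hxy).trans hε'ε.2⟩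

end WidthDimension

section LinearProjection

open Module Submodule

variable {V : Type*} [NormedAddCommGroup V] [NormedSpace ℝ V] [FiniteDimensional ℝ V]
  {ι : Type*} [Countable ι]

theorem exists_forall_notMem_of_ne_top (W : ι → Submodule ℝ V) (hW : ∀ j, W j ≠ ⊤) :
    ∃ v : V, ∀ j, v ∉ W j := by
  have hdense : ∀ j, Dense ((W j : Set V)ᶜ) := fun j => by
    rw [← interior_eq_empty_iff_dense_compl]
    by_contra h
    exact hW j ((W j).eq_top_of_nonempty_interior' (Set.nonempty_iff_ne_empty.mpr h))
  obtain ⟨v, hv⟩ := (dense_iInter_of_isOpen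
    (fun j => (W j).closed_of_finiteDimensional.isOpen_compl) hdense).nonempty
  exact ⟨v, Set.mem_iInter.mp hv⟩

theorem exists_submodule_finrank_eq_disjoint (W : ι → Submodule ℝ V) {n : ℕ}
    (hW : ∀ j, finrank ℝ (W j) ≤ n) :
    ∀ r ≤ finrank ℝ V - n, ∃ Z : Submodule ℝ V, finrank ℝ Z = r ∧ ∀ j, Disjoint (W j) Z := by
  intro r
  induction r with
  | zero => exact fun _ => ⟨⊥, finrank_bot ℝ V, fun _ => disjoint_bot_right⟩
  | succ r ih =>
    intro hr
    obtain ⟨Z, hZ, hWZ⟩ := ih (by omega)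
    -- `W' none = ⊥` makes the new vector avoid `Z` itself.
    set W' : Option ι → Submodule ℝ V := fun o => o.elim ⊥ W
    have hW' : ∀ o, finrank ℝ (W' o) ≤ n := by
      rintro (_ | j)
      · exact (finrank_bot ℝ V).trans_le (Nat.zero_le n)
      · exact hW j
    have hproper : ∀ o, Z ⊔ W' o ≠ ⊤ := by
      intro o htop
      have := (finrank_add_le_finrank_add_finrank Z (W' o)).trans
        (Nat.add_le_add_left (hW' o) _)
      rw [htop, finrank_top] at this
      omega
    obtain ⟨v, hv⟩ := exists_forall_notMem_of_ne_top _ hproper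
    have hvZ : v ∉ Z := fun h => hv none (by simpa [W'] using h)
    refine ⟨Z ⊔ span ℝ {v}, by rw [finrank_sup_span_singleton hvZ, hZ], fun j => ?_⟩
    rw [disjoint_def]
    intro w hw hwZv
    obtain ⟨z, hz, _, hv', rfl⟩ := mem_sup.mp hwZv
    obtain ⟨a, rfl⟩ := mem_span_singleton.mp hv'
    rcases eq_or_ne a 0 with rfl | ha
    · rw [zero_smul, add_zero] at hw ⊢
      exact disjoint_def.mp (hWZ j) z hw hz
    · refine absurd ?_ (hv (some j))
      have : v = a⁻¹ • ((z + a • v) - z) := by rw [add_sub_cancel_left, inv_smul_smul₀ ha]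
      rw [this]
      exact smul_mem _ _ (sub_mem (mem_sup_right hw) (mem_sup_left hz))

theorem exists_linearMap_disjoint_ker {F : Type*} [AddCommGroup F] [Module ℝ F]
    [FiniteDimensional ℝ F] (W : ι → Submodule ℝ V) (hW : ∀ j, finrank ℝ (W j) ≤ finrank ℝ F) :
    ∃ L : V →ₗ[ℝ] F, ∀ j, Disjoint (W j) (LinearMap.ker L) := by
  obtain ⟨Z, hZ, hWZ⟩ := exists_submodule_finrank_eq_disjoint W hW _ le_rfl
  have hquot : finrank ℝ (V ⧸ Z) ≤ finrank ℝ F := by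
    have := Z.finrank_quotient_add_finrank
    omega
  obtain ⟨e, he⟩ := finrank_le_iff_exists_linearMap.mp hquot
  refine ⟨e.comp Z.mkQ, fun j => ?_⟩
  rw [LinearMap.ker_comp_of_ker_eq_bot _ (LinearMap.ker_eq_bot.mpr he), ker_mkQ]
  exact hWZ j

end LinearProjection

namespace Geometry.SimplicialComplex

open Module

variable {E : Type*} [NormedAddCommGroup E] [NormedSpace ℝ E] {K : SimplicialComplex ℝ E}

theorem isCompact_space (hK : K.faces.Finite) : IsCompact K.space := by
  rw [space]
  exact hK.isCompact_biUnion fun s _ => s.finite_toSet.isCompact_convexHull ℝ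

theorem exists_linearMap_injOn_faces [FiniteDimensional ℝ E] (hK : K.faces.Finite) {n : ℕ}
    (hcard : ∀ s ∈ K.faces, s.card ≤ n + 1) :
    ∃ L : E →ₗ[ℝ] (Fin n → ℝ), ∀ s ∈ K.faces, Set.InjOn L (convexHull ℝ (s : Set E)) := by
  classical
  have : Finite K.faces := hK
  have hrank : ∀ s : K.faces, finrank ℝ (vectorSpan ℝ (s.1 : Set E)) ≤ finrank ℝ (Fin n → ℝ) := by
    intro ⟨s, hs⟩
    have h := finrank_vectorSpan_image_finset_le ℝ id s (n := s.card - 1)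
      (by have := (K.nonempty_of_mem_faces hs).card_pos; omega)
    rw [Finset.image_id] at h
    show finrank ℝ (vectorSpan ℝ (s : Set E)) ≤ _
    rw [finrank_fin_fun]
    have := hcard s hs
    omega
  obtain ⟨L, hL⟩ := exists_linearMap_disjoint_ker _ hrank
  refine ⟨L, fun s hs x hx y hy hxy => ?_⟩
  have hdir : x - y ∈ vectorSpan ℝ (s : Set E) := by
    rw [← direction_affineSpan, ← vsub_eq_sub]
    exact AffineSubspace.vsub_mem_direction (convexHull_subset_affineSpan _ hx)
      (convexHull_subset_affineSpan _ hy)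
  have hker : x - y ∈ LinearMap.ker L := by rw [LinearMap.mem_ker, map_sub, hxy, sub_self]
  exact sub_eq_zero.mp (Submodule.disjoint_def.mp (hL ⟨s, hs⟩) _ hdir hker)

/-- Choosing a face through each point of a fiber is injective, since `L` is injective on
faces. -/
theorem encard_fiber_le {F : Type*} (hK : K.faces.Finite) {L : E → F}
    (hL : ∀ s ∈ K.faces, Set.InjOn L (convexHull ℝ (s : Set E))) (t : F) :
    ((fun x : K.space => L x) ⁻¹' {t}).encard ≤ K.faces.ncard := by
  have hface : ∀ x : K.space, ∃ s ∈ K.faces, (x : E) ∈ convexHull ℝ (s : Set E) :=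
    fun x => mem_space_iff.mp x.2
  choose face hface_mem hface_hull using hface
  rw [hK.cast_ncard_eq]
  refine Set.encard_le_encard_of_injOn (fun x _ => hface_mem x) fun x hx y hy hxy => ?_
  refine Subtype.ext (hL _ (hface_mem x) (hface_hull x) ?_ (hx.trans hy.symm))
  rw [hxy]
  exact hface_hull y

end Geometry.SimplicialComplex

/-- An open cover of mesh `< δ`, colored with `n + 1` colors so that members of equal color
through a common point coincide; thus every point lies in at most `n + 1` distinct members. -/
structure IsColoredCover {X ι : Type*} [PseudoMetricSpace X] {n : ℕ} (U : ι → Set X)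
    (color : ι → Fin (n + 1)) (δ : ℝ) : Prop where
  isOpen : ∀ i, IsOpen (U i)
  exists_mem : ∀ x, ∃ i, x ∈ U i
  dist_lt : ∀ i, ∀ x ∈ U i, ∀ y ∈ U i, dist x y < δ
  eq_of_color_eq : ∀ {x i j}, x ∈ U i → x ∈ U j → color i = color j → U i = U j

section Bricks

variable {n : ℕ}

theorem eq_of_abs_sub_intCast_le {a : ℝ} {k k' : Fin (n + 1)} {m m' : ℤ}
    (h : |a - k / (n + 1) - m| ≤ 1 / (4 * (n + 1)))
    (h' : |a - k' / (n + 1) - m'| ≤ 1 / (4 * (n + 1))) : k = k' := by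
  have hc : (0 : ℝ) < n + 1 := by positivity
  have hd : |((k' - k + (m' - m) * (n + 1) : ℤ) : ℝ)| ≤ 1 / 2 := by
    have e : ((k' - k + (m' - m) * (n + 1) : ℤ) : ℝ) =
        (n + 1) * ((a - k / (n + 1) - m) - (a - k' / (n + 1) - m')) := by
      push_cast
      field_simp
      ring
    rw [e, abs_mul, abs_of_pos hc]
    calc (n + 1) * |(a - k / (n + 1) - m) - (a - k' / (n + 1) - m')|
        ≤ (n + 1) * (1 / (4 * (n + 1)) + 1 / (4 * (n + 1))) :=
          mul_le_mul_of_nonneg_left ((abs_sub _ _).trans (add_le_add h h')) hc.le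
      _ = 1 / 2 := by field_simp; ring
  have hzero : (k' - k + (m' - m) * (n + 1) : ℤ) = 0 := by
    by_contra hne
    have h1 : (1 : ℝ) ≤ |((k' - k + (m' - m) * (n + 1) : ℤ) : ℝ)| := by
      rw [← Int.cast_abs]
      exact_mod_cast Int.one_le_abs hne
    linarith
  have hk := k.2
  have hk' := k'.2
  ext
  rcases lt_trichotomy m m' with hm | hm | hm
  · nlinarith
  · subst hm
    omega
  · nlinarith

theorem exists_color_forall_lt_abs_sub_intCast (a : Fin n → ℝ) :
    ∃ k : Fin (n + 1), ∀ i (m : ℤ), 1 / (4 * (n + 1)) < |a i - k / (n + 1) - m| := by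
  classical
  set bad : Finset (Fin (n + 1)) := Finset.univ.biUnion fun i =>
    {k | ∃ m : ℤ, |a i - k / (n + 1) - m| ≤ 1 / (4 * (n + 1))}
  have hbad : bad.card < (Finset.univ : Finset (Fin (n + 1))).card := by
    calc bad.card ≤ ∑ _i : Fin n, 1 := Finset.card_biUnion_le.trans (Finset.sum_le_sum
          fun i _ => Finset.card_le_one.mpr fun k hk k' hk' => by
            simp only [Finset.mem_filter, Finset.mem_univ, true_and] at hk hk'
            obtain ⟨m, hm⟩ := hk
            obtain ⟨m', hm'⟩ := hk'
            exact eq_of_abs_sub_intCast_le hm hm')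
      _ < _ := by simp
  obtain ⟨k, -, hk⟩ := Finset.exists_mem_notMem_of_card_lt_card hbad
  refine ⟨k, fun i m => not_le.mp fun h => hk ?_⟩
  simp only [bad, Finset.mem_biUnion, Finset.mem_filter, Finset.mem_univ, true_and]
  exact ⟨i, m, h⟩

theorem floor_add_lt_and_lt_floor_add_one_sub {x γ : ℝ} (h : ∀ m : ℤ, γ < |x - m|) :
    ⌊x⌋ + γ < x ∧ x < ⌊x⌋ + 1 - γ := by
  have h₀ := h ⌊x⌋
  have h₁ := h (⌊x⌋ + 1)
  rw [abs_of_nonneg (sub_nonneg.mpr (Int.floor_le x))] at h₀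
  rw [abs_of_neg (by push_cast; linarith [Int.lt_floor_add_one x])] at h₁
  push_cast at h₁
  constructor <;> linarith

/-- Color `k` consists of the open cubes `∏ᵢ η (zᵢ + k/(n+1) + γ, zᵢ + k/(n+1) + 1 - γ)` with
`γ = 1/(4(n+1))`. A point lies in no cube of color `k` only if one of its coordinates is
`ηγ`-close to `η (k/(n+1) + ℤ)`, which happens for at most one `k` per coordinate. -/
theorem exists_isColoredCover_euclidean (n : ℕ) {η : ℝ} (hη : 0 < η) :
    ∃ B : Fin (n + 1) × (Fin n → ℤ) → Set (Fin n → ℝ), IsColoredCover B Prod.fst η := by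
  set γ : ℝ := 1 / (4 * (n + 1))
  have hγ : 0 < γ := by positivity
  set θ : (Fin n → ℝ) → Fin (n + 1) → Fin n → ℝ := fun t k i => t i / η - k / (n + 1)
  have hfloor : ∀ {x : ℝ} {m : ℤ}, (m : ℝ) + γ < x → x < m + 1 - γ → ⌊x⌋ = m :=
    fun h h' => Int.floor_eq_iff.mpr ⟨by linarith, by linarith⟩
  refine ⟨fun p => {t | ∀ i, (p.2 i : ℝ) + γ < θ t p.1 i ∧ θ t p.1 i < p.2 i + 1 - γ},
    ⟨fun p => ?_, fun t => ?_, fun p t ht t' ht' => ?_, fun {t p p'} ht ht' hpp' => ?_⟩⟩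
  · simp only [Set.ofPred_forall, Set.ofPred_and]
    exact isOpen_iInter_of_finite fun i =>
      (isOpen_lt (by fun_prop) (by fun_prop)).inter (isOpen_lt (by fun_prop) (by fun_prop))
  · obtain ⟨k, hk⟩ := exists_color_forall_lt_abs_sub_intCast fun i => t i / η
    exact ⟨(k, fun i => ⌊θ t k i⌋), fun i => floor_add_lt_and_lt_floor_add_one_sub (hk i)⟩
  · refine (dist_pi_lt_iff hη).mpr fun i => ?_
    obtain ⟨h1, h2⟩ := ht i
    obtain ⟨h1', h2'⟩ := ht' i
    have e : t i - t' i = η * (θ t p.1 i - θ t' p.1 i) := by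
      dsimp only [θ]
      field_simp
      ring
    rw [Real.dist_eq, e, abs_mul, abs_of_pos hη]
    calc η * |θ t p.1 i - θ t' p.1 i| < η * 1 :=
          mul_lt_mul_of_pos_left (abs_sub_lt_iff.mpr ⟨by linarith, by linarith⟩) hη
      _ = η := mul_one η
  · obtain ⟨k, z⟩ := p
    obtain ⟨k', z'⟩ := p'
    obtain rfl : k = k' := hpp'
    obtain rfl : z = z' := funext fun i =>
      (hfloor (ht i).1 (ht i).2).symm.trans (hfloor (ht' i).1 (ht' i).2)
    rfl

end Bricks

namespace IsColoredCover

variable {X Y ι : Type*} [PseudoMetricSpace X] [PseudoMetricSpace Y] {n : ℕ} {U : ι → Set Y}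
  {c : ι → Fin (n + 1)} {lam δ : ℝ}

theorem preimage (hU : IsColoredCover U c lam) {f : X → Y} (hf : Continuous f)
    (hfd : ∀ x x', dist (f x) (f x') < lam → dist x x' < δ) :
    IsColoredCover (fun i => f ⁻¹' U i) c δ where
  isOpen i := (hU.isOpen i).preimage hf
  exists_mem x := hU.exists_mem (f x)
  dist_lt i _ hx _ hy := hfd _ _ (hU.dist_lt i _ hx _ hy)
  eq_of_color_eq hx hy hc := by rw [hU.eq_of_color_eq hx hy hc]

open scoped Classical in
theorem exists_finset [CompactSpace Y] (hU : IsColoredCover U c δ) :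
    ∃ 𝒰 : Finset (Set Y), (∀ V ∈ 𝒰, IsOpen V) ∧ (∀ y, ∃ V ∈ 𝒰, y ∈ V) ∧
      (∀ V ∈ 𝒰, ∀ y ∈ V, ∀ y' ∈ V, dist y y' < δ) ∧ ∀ y, {V ∈ 𝒰 | y ∈ V}.card ≤ n + 1 := by
  obtain ⟨τ, hτ⟩ := isCompact_univ.elim_finite_subcover U hU.isOpen
    fun y _ => Set.mem_iUnion.mpr (hU.exists_mem y)
  refine ⟨τ.image U, ?_, fun y => ?_, ?_, fun y => ?_⟩
  · simpa using fun i _ => hU.isOpen i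
  · obtain ⟨i, hi, hy⟩ := Set.mem_iUnion₂.mp (hτ (Set.mem_univ y))
    exact ⟨U i, Finset.mem_image_of_mem U hi, hy⟩
  · simpa using fun i _ => hU.dist_lt i
  · have : Nonempty ι := ⟨(hU.exists_mem y).choose⟩
    have hrep : ∀ V ∈ τ.image U, U (Function.invFun U V) = V := fun V hV =>
      Function.invFun_eq (by obtain ⟨i, -, rfl⟩ := Finset.mem_image.mp hV; exact ⟨i, rfl⟩)
    calc {V ∈ τ.image U | y ∈ V}.card ≤ (Finset.univ : Finset (Fin (n + 1))).card := by
          refine Finset.card_le_card_of_injOn (fun V => c (Function.invFun U V))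
            (fun _ _ => Finset.mem_univ _) fun V hV V' hV' hcol => ?_
          simp only [Finset.coe_filter, Set.mem_ofPred_eq] at hV hV'
          calc V = U (Function.invFun U V) := (hrep V hV.1).symm
            _ = U (Function.invFun U V') := hU.eq_of_color_eq
                (by rw [hrep V hV.1]; exact hV.2) (by rw [hrep V' hV'.1]; exact hV'.2) hcol
            _ = V' := hrep V' hV'.1
      _ = n + 1 := by simp

end IsColoredCover

/-- By compactness of `{(x, x') | ε ≤ dist x x'}`. -/
theorem exists_pos_forall_dist_lt_of_dist_map_lt {X Y : Type*} [PseudoMetricSpace X]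
    [CompactSpace X] [MetricSpace Y] {f : X → Y} (hf : Continuous f) {ε : ℝ}
    (hfib : ∀ x x', f x = f x' → dist x x' < ε) :
    ∃ lam > 0, ∀ x x', dist (f x) (f x') < lam → dist x x' < ε := by
  set C := {p : X × X | ε ≤ dist p.1 p.2}
  have hC : IsCompact C := (isClosed_le continuous_const continuous_dist).isCompact
  rcases C.eq_empty_or_nonempty with hC₀ | hC₀
  · refine ⟨1, one_pos, fun x x' _ => not_le.mp fun h => ?_⟩
    exact (Set.eq_empty_iff_forall_notMem.mp hC₀) (x, x') h
  obtain ⟨p, hp, hmin⟩ := hC.exists_isMinOn hC₀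
    ((hf.comp continuous_fst).dist (hf.comp continuous_snd)).continuousOn
  refine ⟨dist (f p.1) (f p.2), dist_pos.mpr fun h => (not_le.mpr (hfib _ _ h)) hp,
    fun x x' hxx' => not_le.mp fun h => (not_le.mpr hxx') (hmin (a := (x, x')) h)⟩

section FiniteToOne

variable {Y T : Type*} [PseudoMetricSpace Y]

def fiberProximityGraph (L : Y → T) (η : ℝ) : SimpleGraph Y where
  Adj a b := a ≠ b ∧ L a = L b ∧ dist a b < η
  symm := ⟨fun _ _ ⟨hne, hL, hd⟩ => ⟨hne.symm, hL.symm, by rwa [dist_comm]⟩⟩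
  loopless := ⟨fun _ h => h.1 rfl⟩

namespace fiberProximityGraph

variable {L : Y → T} {η : ℝ}

@[simp]
theorem adj_iff {a b : Y} :
    (fiberProximityGraph L η).Adj a b ↔ a ≠ b ∧ L a = L b ∧ dist a b < η :=
  Iff.rfl

theorem apply_eq_of_walk {a b : Y} (p : (fiberProximityGraph L η).Walk a b) : L a = L b := by
  induction p with
  | nil => rfl
  | cons h _ ih => exact (adj_iff.mp h).2.1.trans ih

theorem dist_le_length_mul {a b : Y} (p : (fiberProximityGraph L η).Walk a b) :
    dist a b ≤ p.length * η := by
  induction p with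
  | nil => simp
  | @cons a b c h p ih =>
    rw [SimpleGraph.Walk.length_cons, Nat.cast_succ]
    linarith [dist_triangle a b c, (adj_iff.mp h).2.2]

theorem reachable_of_dist_lt {a b : Y} (hab : L a = L b) (h : dist a b < η) :
    (fiberProximityGraph L η).Reachable a b := by
  by_cases heq : a = b
  · exact heq ▸ SimpleGraph.Reachable.refl a
  · exact (adj_iff.mpr ⟨heq, hab, h⟩).reachable

/-- A path stays in one fiber and visits each of its points once. -/
theorem dist_le_of_reachable {N : ℕ} (hfib : ∀ t, (L ⁻¹' {t}).encard ≤ N) (hη : 0 ≤ η)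
    {a b : Y} (h : (fiberProximityGraph L η).Reachable a b) : dist a b ≤ N * η := by
  classical
  obtain ⟨p, hp⟩ := h.some.toPath
  have hsupp : (p.support.toFinset : Set Y) ⊆ L ⁻¹' {L a} := fun v hv =>
    (apply_eq_of_walk (p.takeUntil v (List.mem_toFinset.mp hv))).symm
  have hlen : p.length + 1 ≤ N := by
    have := (Set.encard_le_encard hsupp).trans (hfib (L a))
    rwa [Set.encard_coe_eq_coe_finsetCard, List.toFinset_card_of_nodup hp.support_nodup,
      SimpleGraph.Walk.length_support, Nat.cast_le] at this
  calc dist a b ≤ p.length * η := dist_le_length_mul p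
    _ ≤ N * η := mul_le_mul_of_nonneg_right (by exact_mod_cast (Nat.le_succ _).trans hlen) hη

end fiberProximityGraph

/-- Uniform upper semicontinuity of the fibers of a map on a compact space. -/
theorem exists_forall_preimage_subset_thickening [CompactSpace Y] [MetricSpace T]
    [Nonempty T] {L : Y → T} (hL : Continuous L) {γ : ℝ} (hγ : 0 < γ) :
    ∃ lam > 0, ∃ t₀ : Set T → T, ∀ S : Set T, (∀ t ∈ S, ∀ t' ∈ S, dist t t' < lam) →
      ∀ t ∈ S, L ⁻¹' {t} ⊆ thickening γ (L ⁻¹' {t₀ S}) := by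
  set N : T → Set T := fun t₀ => (L '' (thickening γ (L ⁻¹' {t₀}))ᶜ)ᶜ
  have hN_open : ∀ t₀, IsOpen (N t₀) := fun t₀ =>
    (hL.isClosedMap _ isOpen_thickening.isClosed_compl).isOpen_compl
  have hN_mem : ∀ t₀, t₀ ∈ N t₀ := fun t₀ ⟨y, hy, hyt⟩ =>
    hy (self_subset_thickening hγ _ hyt)
  have hN_sub : ∀ t₀, ∀ t ∈ N t₀, L ⁻¹' {t} ⊆ thickening γ (L ⁻¹' {t₀}) :=
    fun t₀ t ht y hy => by_contra fun h => ht ⟨y, h, hy⟩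
  obtain ⟨lam, hlam, hleb⟩ := lebesgue_number_lemma_of_metric (isCompact_range hL) hN_open
    fun t _ => Set.mem_iUnion.mpr ⟨t, hN_mem t⟩
  have hS : ∀ S : Set T, ∃ t₀, (∀ t ∈ S, ∀ t' ∈ S, dist t t' < lam) →
      ∀ t ∈ S, L ⁻¹' {t} ⊆ thickening γ (L ⁻¹' {t₀}) := by
    intro S
    by_cases h : ∃ t ∈ S, t ∈ Set.range L
    · obtain ⟨t, htS, htL⟩ := h
      obtain ⟨t₀, ht₀⟩ := hleb t htL
      exact ⟨t₀, fun hS t' ht' => hN_sub t₀ t' (ht₀ (mem_ball.mpr (hS t' ht' t htS)))⟩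
    · push Not at h
      exact ⟨Classical.arbitrary T, fun _ t ht y hy => absurd ⟨y, hy⟩ (h t ht)⟩
  choose t₀ ht₀ using hS
  exact ⟨lam, hlam, t₀, ht₀⟩

def fiberPiece (L : Y → T) (η : ℝ) (B : Set T) (t₀ : T) (c : Y) : Set Y :=
  L ⁻¹' B ∩ thickening (η / 2) ({u | (fiberProximityGraph L η).Reachable c u} ∩ L ⁻¹' {t₀})

namespace fiberPiece

variable {L : Y → T} {η : ℝ} {B : Set T} {t₀ : T} {c : Y}

theorem mem_iff {x : Y} : x ∈ fiberPiece L η B t₀ c ↔ L x ∈ B ∧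
    ∃ u, (fiberProximityGraph L η).Reachable c u ∧ L u = t₀ ∧ dist x u < η / 2 := by
  simp only [fiberPiece, Set.mem_inter_iff, Set.mem_preimage, mem_thickening_iff,
    Set.mem_ofPred_eq, Set.mem_singleton_iff, and_assoc]

theorem isOpen [TopologicalSpace T] (hL : Continuous L) (hB : IsOpen B) :
    IsOpen (fiberPiece L η B t₀ c) :=
  (hB.preimage hL).inter isOpen_thickening

theorem dist_lt {N : ℕ} (hfib : ∀ t, (L ⁻¹' {t}).encard ≤ N) (hη : 0 ≤ η) {x y : Y}
    (hx : x ∈ fiberPiece L η B t₀ c) (hy : y ∈ fiberPiece L η B t₀ c) :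
    dist x y < (N + 1) * η := by
  obtain ⟨-, u, hu, -, hxu⟩ := mem_iff.mp hx
  obtain ⟨-, u', hu', -, hyu'⟩ := mem_iff.mp hy
  have huu' := fiberProximityGraph.dist_le_of_reachable hfib hη (hu.symm.trans hu')
  calc dist x y ≤ dist x u + dist u u' + dist u' y := dist_triangle4 _ _ _ _
    _ < η / 2 + N * η + η / 2 := by linarith [dist_comm u' y]
    _ = (N + 1) * η := by ring

/-- Points of one fiber at distance `< η` lie in one component. -/
theorem eq_of_mem {c' x : Y} (hx : x ∈ fiberPiece L η B t₀ c)
    (hx' : x ∈ fiberPiece L η B t₀ c') : fiberPiece L η B t₀ c = fiberPiece L η B t₀ c' := by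
  obtain ⟨-, u, hu, hLu, hxu⟩ := mem_iff.mp hx
  obtain ⟨-, u', hu', hLu', hxu'⟩ := mem_iff.mp hx'
  have hcc' : (fiberProximityGraph L η).Reachable c c' := (hu.trans
    (fiberProximityGraph.reachable_of_dist_lt (hLu.trans hLu'.symm)
      (by linarith [dist_triangle_left u u' x]))).trans hu'.symm
  ext v
  simp only [mem_iff]
  exact and_congr_right' (exists_congr fun w =>
    and_congr_left' ⟨hcc'.symm.trans, hcc'.trans⟩)

end fiberPiece

/-- The members are the pieces of the preimages of the cubes of
`exists_isColoredCover_euclidean` around the components of one reference fiber. -/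
theorem exists_isColoredCover_of_encard_fiber_le {Y : Type u} [PseudoMetricSpace Y]
    [CompactSpace Y] {n N : ℕ} {L : Y → Fin n → ℝ} (hL : Continuous L)
    (hfib : ∀ t, (L ⁻¹' {t}).encard ≤ N) {δ : ℝ} (hδ : 0 < δ) :
    ∃ (ι : Type u) (U : ι → Set Y) (c : ι → Fin (n + 1)), IsColoredCover U c δ := by
  set η : ℝ := δ / (2 * (N + 1))
  have hη : 0 < η := by positivity
  obtain ⟨lam, hlam, t₀, ht₀⟩ := exists_forall_preimage_subset_thickening hL (half_pos hη)
  obtain ⟨B, hB⟩ := exists_isColoredCover_euclidean n hlam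
  refine ⟨_, fun q : (Fin (n + 1) × (Fin n → ℤ)) × Y => fiberPiece L η (B q.1) (t₀ (B q.1)) q.2,
    fun q => q.1.1, ⟨fun q => fiberPiece.isOpen hL (hB.isOpen q.1), fun x => ?_,
    fun q x hx y hy => ?_, fun {x q q'} hx hx' hqq' => ?_⟩⟩
  · obtain ⟨p, hp⟩ := hB.exists_mem (L x)
    obtain ⟨c, hc, hxc⟩ := mem_thickening_iff.mp (ht₀ (B p) (hB.dist_lt p) (L x) hp rfl)
    exact ⟨(p, c), fiberPiece.mem_iff.mpr ⟨hp, c, .refl c, hc, hxc⟩⟩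
  · have hNη : (N + 1) * η = δ / 2 := by
      simp only [η]
      field_simp
    linarith [fiberPiece.dist_lt hfib hη.le hx hy]
  · have hBeq : B q.1 = B q'.1 :=
      hB.eq_of_color_eq (fiberPiece.mem_iff.mp hx).1 (fiberPiece.mem_iff.mp hx').1 hqq'
    simp only [hBeq] at hx ⊢
    exact fiberPiece.eq_of_mem hx hx'

end FiniteToOne

theorem exists_isColoredCover_of_topDim_le {X : Type*} [MetricSpace X] [CompactSpace X] {n : ℕ}
    (hdim : topDim X (fun x y => dist x y) ≤ n) {δ : ℝ} (hδ : 0 < δ) :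
    ∃ (ι : Type) (U : ι → Set X) (c : ι → Fin (n + 1)), IsColoredCover U c δ := by
  obtain ⟨k, K, π, hK, hcard, hπ, hfib⟩ := exists_simplicialComplex_of_topDim_le hdim hδ
  obtain ⟨L, hL⟩ := K.exists_linearMap_injOn_faces hK hcard
  have : CompactSpace K.space := isCompact_iff_compactSpace.mp (K.isCompact_space hK)
  obtain ⟨lam, hlam, hπlam⟩ := exists_pos_forall_dist_lt_of_dist_map_lt hπ hfib
  obtain ⟨ι, U, c, hU⟩ := exists_isColoredCover_of_encard_fiber_le
    (L.continuous_of_finiteDimensional.comp continuous_subtype_val)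
    (K.encard_fiber_le hK hL) hlam
  exact ⟨ι, _, c, hU.preimage hπ hπlam⟩

/-- The affine hulls of the families `y '' S i` have a common point `p`; the affine hull of
`y '' S i` is the set of combinations `∑ j ∈ S i, w j • y j` with `∑ j ∈ S i, w j = 1`. -/
def AffineHullsMeet {κ ι E : Type*} [AddCommGroup E] [Module ℝ E] (y : ι → E)
    (S : κ → Finset ι) : Prop :=
  ∃ (w : κ → ι → ℝ) (p : E), ∀ i, ∑ j ∈ S i, w i j = 1 ∧ ∑ j ∈ S i, w i j • y j = p

open Matrix in
theorem Matrix.det_transpose_mul_self_ne_zero_iff {R m k : Type*} [Field R] [LinearOrder R]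
    [IsStrictOrderedRing R] [Fintype m] [Fintype k] [DecidableEq k] (A : Matrix m k R) :
    (Aᵀ * A).det ≠ 0 ↔ ∀ c, A *ᵥ c = 0 → c = 0 := by
  have hker : ∀ v, (Aᵀ * A) *ᵥ v = 0 ↔ A *ᵥ v = 0 := fun v => by
    simpa only [LinearMap.mem_ker, mulVecLin_apply] using
      SetLike.ext_iff.mp (Matrix.ker_mulVecLin_transpose_mul_self A) v
  rw [Ne, ← Matrix.exists_mulVec_eq_zero_iff]
  simp only [hker, not_exists, not_and, not_imp_not]

theorem AnalyticAt.matrix_det {𝕜 E m : Type*} [NontriviallyNormedField 𝕜]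
    [NormedAddCommGroup E] [NormedSpace 𝕜 E] [Fintype m] [DecidableEq m] {A : E → Matrix m m 𝕜}
    {y₀ : E} (h : ∀ i j, AnalyticAt 𝕜 (fun y => A y i j) y₀) :
    AnalyticAt 𝕜 (fun y => (A y).det) y₀ := by
  simp only [Matrix.det_apply']
  fun_prop

theorem dense_setOf_ne_zero_of_analyticOnNhd {E F : Type*} [NormedAddCommGroup E]
    [NormedSpace ℝ E] [NormedAddCommGroup F] [NormedSpace ℝ F] {f : E → F}
    (hf : AnalyticOnNhd ℝ f Set.univ) (h : ∃ y, f y ≠ 0) :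
    Dense {y | f y ≠ 0} := by
  refine dense_iff_inter_open.mpr fun U hU ⟨x, hx⟩ => ?_
  by_contra hempty
  have hzero : f =ᶠ[𝓝 x] 0 := Filter.mem_of_superset (hU.mem_nhds hx) fun y hy =>
    not_not.mp fun hfy => hempty ⟨y, hy, hfy⟩
  obtain ⟨y, hy⟩ := h
  exact hy (hf.eqOn_zero_of_preconnected_of_eventuallyEq_zero isPreconnected_univ
    (Set.mem_univ x) hzero (Set.mem_univ y))

section GeneralPosition

variable {n : ℕ} {ι : Type*}

/-- An affine isomorphism of `ℝ^{n+1}` onto the hyperplane `∑ = 1` of `ℝ^{n+2}`. -/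
def affineLift (y : Fin (n + 1) → ℝ) : Fin (n + 2) → ℝ := Fin.snoc y (1 - ∑ b, y b)

theorem affineLift_sum {s : Finset ι} {w : ι → ℝ} (hw : ∑ j ∈ s, w j = 1)
    (y : ι → Fin (n + 1) → ℝ) :
    ∑ j ∈ s, w j • affineLift (y j) = affineLift (∑ j ∈ s, w j • y j) := by
  funext b
  induction b using Fin.lastCases with
  | last =>
    simp only [affineLift, Finset.sum_apply, Pi.smul_apply, Fin.snoc_last, smul_eq_mul, mul_sub,
      mul_one, Finset.sum_sub_distrib, hw, Finset.mul_sum]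
    rw [Finset.sum_comm]
  | cast b =>
    simp [affineLift, Finset.sum_apply]

theorem affineLift_init {q : Fin (n + 2) → ℝ} (hq : ∑ b, q b = 1) :
    affineLift (Fin.init q) = q := by
  rw [Fin.sum_univ_castSucc] at hq
  rw [affineLift, show 1 - ∑ b, Fin.init q b = q (Fin.last (n + 1)) by
    simp only [Fin.init]; linarith, Fin.snoc_init_self]

theorem analyticAt_affineLift_apply [Fintype ι] (j : ι) (b : Fin (n + 2))
    (y₀ : ι → Fin (n + 1) → ℝ) :
    AnalyticAt ℝ (fun y : ι → Fin (n + 1) → ℝ => affineLift (y j) b) y₀ := by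
  have hcoord : ∀ b', AnalyticAt ℝ (fun y : ι → Fin (n + 1) → ℝ => y j b') y₀ := fun b' =>
    ((ContinuousLinearMap.proj (R := ℝ) (φ := fun _ : Fin (n + 1) => ℝ) b').comp
      (ContinuousLinearMap.proj (R := ℝ) (φ := fun _ : ι => Fin (n + 1) → ℝ) j)).analyticAt y₀
  induction b using Fin.lastCases with
  | last =>
    simp only [affineLift, Fin.snoc_last]
    exact analyticAt_const.sub (Finset.analyticAt_fun_sum _ fun b' _ => hcoord b')
  | cast b => simpa [affineLift] using hcoord b

variable (S : Fin (n + 2) → Finset ι)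

def affineHullsMatrix (y : ι → Fin (n + 1) → ℝ) :
    Matrix (Fin (n + 2) × Fin (n + 2)) (Σ i, S i) ℝ :=
  fun r x => ((if x.1 = r.1 then 1 else 0) - (if x.1 = 0 then 1 else 0)) * affineLift (y x.2) r.2

open Matrix in
theorem affineHullsMatrix_mulVec (y : ι → Fin (n + 1) → ℝ) (c : (Σ i, S i) → ℝ)
    (i b : Fin (n + 2)) :
    (affineHullsMatrix S y *ᵥ c) (i, b) = (∑ j : S i, c ⟨i, j⟩ • affineLift (y j)) b -
      (∑ j : S 0, c ⟨0, j⟩ • affineLift (y j)) b := by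
  simp only [mulVec, dotProduct, Fintype.sum_sigma, affineHullsMatrix, Finset.sum_apply,
    Pi.smul_apply, smul_eq_mul, sub_mul, ite_mul, one_mul, zero_mul, Finset.sum_sub_distrib,
    Finset.sum_ite_irrel, Finset.sum_const_zero, Finset.sum_ite_eq', Finset.mem_univ, if_true,
    mul_comm (c _)]

open Matrix in
theorem not_affineHullsMeet_of_affineHullsMatrix_injective {y : ι → Fin (n + 1) → ℝ}
    (h : ∀ c, affineHullsMatrix S y *ᵥ c = 0 → c = 0) : ¬ AffineHullsMeet y S := by
  rintro ⟨w, p, hw⟩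
  have hV : ∀ i, ∑ j : S i, w i j • affineLift (y j) = affineLift p := fun i => by
    rw [Finset.sum_coe_sort (S i) fun j => w i j • affineLift (y j), affineLift_sum (hw i).1,
      (hw i).2]
  have hc := h (fun x => w x.1 x.2) (funext fun r => by
    rw [← Prod.mk.eta (p := r), affineHullsMatrix_mulVec]
    simp only [hV, sub_self, Pi.zero_apply])
  have h1 := (hw 0).1
  rw [Finset.sum_eq_zero fun j hj => congrFun hc ⟨0, ⟨j, hj⟩⟩] at h1
  exact zero_ne_one h1

open Matrix in
/-- The witness puts the points of `S i` on distinct vertices of the standard simplex other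
than the `i`-th one; the lifts of the vertices form the standard basis of `ℝ^{n+2}`. -/
theorem exists_affineHullsMatrix_injective (hdisj : ∀ i i', i ≠ i' → Disjoint (S i) (S i'))
    (hcard : ∀ i, (S i).card ≤ n + 1) :
    ∃ y : ι → Fin (n + 1) → ℝ, ∀ c, affineHullsMatrix S y *ᵥ c = 0 → c = 0 := by
  classical
  have hemb : ∀ i, Nonempty (S i ↪ {k : Fin (n + 2) // k ≠ i}) := fun i =>
    Function.Embedding.nonempty_of_card_le (by simpa using hcard i)
  set κ := fun i => (hemb i).some
  set σ : (Σ i, S i) → ι := fun x => x.2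
  have hσ : σ.Injective := by
    rintro ⟨i, j, hj⟩ ⟨i', j', hj'⟩ h
    obtain rfl : j = j' := h
    obtain rfl : i = i' := by
      by_contra hne
      exact Finset.disjoint_left.mp (hdisj i i' hne) hj hj'
    rfl
  set y : ι → Fin (n + 1) → ℝ :=
    Function.extend σ (fun x => Fin.init (Pi.single (κ x.1 x.2 : Fin (n + 2)) 1 : Fin (n + 2) → ℝ))
      0
  have hlift : ∀ i (j : S i), affineLift (y j) = Pi.single (κ i j : Fin (n + 2)) 1 :=
    fun i j => by
      rw [show (j : ι) = σ ⟨i, j⟩ from rfl]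
      simp only [y, hσ.extend_apply]
      exact affineLift_init (by simp)
  refine ⟨y, fun c hc => ?_⟩
  set V : Fin (n + 2) → Fin (n + 2) → ℝ :=
    fun i => ∑ j : S i, c ⟨i, j⟩ • Pi.single (κ i j : Fin (n + 2)) 1
  have hV : ∀ i, V i = V 0 := fun i => funext fun b => by
    have := congrFun hc (i, b)
    rw [affineHullsMatrix_mulVec] at this
    simp only [hlift] at this
    exact sub_eq_zero.mp this
  have hV_diag : ∀ i, V i i = 0 := fun i => by
    simp only [V, Finset.sum_apply, Pi.smul_apply, Pi.single_eq_of_ne (κ i _).2.symm, smul_zero,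
      Finset.sum_const_zero]
  have hV₀ : V 0 = 0 := funext fun k => (congrFun (hV k) k).symm.trans (hV_diag k)
  funext ⟨i, j⟩
  have hli : LinearIndependent ℝ
      fun j : S i => (Pi.single (κ i j : Fin (n + 2)) 1 : Fin (n + 2) → ℝ) :=
    (Pi.linearIndependent_single_one (Fin (n + 2)) ℝ).comp _
      fun j j' h => (κ i).injective (Subtype.ext h)
  exact Fintype.linearIndependent_iff.mp hli _ ((hV i).trans hV₀) j

open Matrix in
theorem analyticOnNhd_det_affineHullsMatrix [Fintype ι] [DecidableEq ι] :
    AnalyticOnNhd ℝ (fun y => ((affineHullsMatrix S y)ᵀ * affineHullsMatrix S y).det)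
      Set.univ := fun y₀ _ =>
  AnalyticAt.matrix_det fun a b => by
    simp only [mul_apply, transpose_apply, affineHullsMatrix]
    exact Finset.analyticAt_fun_sum _ fun r _ =>
      (analyticAt_const.mul (analyticAt_affineLift_apply _ _ _)).mul
        (analyticAt_const.mul (analyticAt_affineLift_apply _ _ _))

end GeneralPosition

open Matrix in
/-- For each admissible `S` the Gram determinant of `affineHullsMatrix S y` is an analytic
function of `y` that does not vanish identically, so it is nonzero on an open dense set;
intersect over the finitely many `S`. -/
theorem exists_forall_dist_lt_not_affineHullsMeet {n : ℕ} {ι : Type*} [Fintype ι]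
    (c : ι → Fin (n + 1) → ℝ) {δ : ℝ} (hδ : 0 < δ) :
    ∃ y : ι → Fin (n + 1) → ℝ, (∀ j, dist (y j) (c j) < δ) ∧
      ∀ S : Fin (n + 2) → Finset ι, (∀ i i', i ≠ i' → Disjoint (S i) (S i')) →
        (∀ i, (S i).card ≤ n + 1) → ¬ AffineHullsMeet y S := by
  classical
  set Valid := {S : Fin (n + 2) → Finset ι //
    (∀ i i', i ≠ i' → Disjoint (S i) (S i')) ∧ ∀ i, (S i).card ≤ n + 1}
  set D : Valid → (ι → Fin (n + 1) → ℝ) → ℝ :=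
    fun S y => ((affineHullsMatrix S.1 y)ᵀ * affineHullsMatrix S.1 y).det
  have hopen : ∀ S, IsOpen {y | D S y ≠ 0} := fun S =>
    isOpen_ne_fun (continuous_iff_continuousAt.mpr fun y =>
      (analyticOnNhd_det_affineHullsMatrix S.1 y trivial).continuousAt) continuous_const
  have hdense : ∀ S, Dense {y | D S y ≠ 0} := fun S => by
    obtain ⟨y, hy⟩ := exists_affineHullsMatrix_injective S.1 S.2.1 S.2.2
    exact dense_setOf_ne_zero_of_analyticOnNhd (analyticOnNhd_det_affineHullsMatrix S.1)
      ⟨y, (Matrix.det_transpose_mul_self_ne_zero_iff _).mpr hy⟩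
  obtain ⟨y, hy, hyc⟩ := (dense_iInter_of_isOpen hopen hdense).exists_mem_open isOpen_ball
    (nonempty_ball.mpr hδ)
  refine ⟨y, fun j => (dist_le_pi_dist y c j).trans_lt (mem_ball.mp hyc),
    fun S hdisj hcard => not_affineHullsMeet_of_affineHullsMatrix_injective S ?_⟩
  exact (Matrix.det_transpose_mul_self_ne_zero_iff _).mp (Set.mem_iInter.mp hy ⟨S, hdisj, hcard⟩)

/-- A Lebesgue number of the cover by the sets `(⋃ j ≠ i, F j)ᶜ`. -/
theorem exists_pos_forall_dist_lt_imp_eq {X ι : Type*} [MetricSpace X] [CompactSpace X]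
    [Finite ι] [Nonempty ι] {F : ι → Set X} (hF : ∀ i, IsClosed (F i))
    (hdisj : ∀ i j, i ≠ j → F i ∩ F j = ∅) :
    ∃ δ > 0, ∀ i j, ∀ x ∈ F i, ∀ y ∈ F j, dist x y < δ → i = j := by
  set V : ι → Set X := fun i => ⋂ (j) (_ : j ≠ i), (F j)ᶜ
  have hV : ∀ {i x}, x ∈ V i ↔ ∀ j, x ∈ F j → j = i := by
    intro i x
    simp only [V, Set.mem_iInter, Set.mem_compl_iff]
    exact forall_congr' fun j =>
      ⟨fun h hx => not_not.mp fun hne => h hne hx, fun h hne hx => hne (h hx)⟩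
  have hV_open : ∀ i, IsOpen (V i) := fun i =>
    isOpen_iInter_of_finite fun j => isOpen_iInter_of_finite fun _ => (hF j).isOpen_compl
  have hV_cover : Set.univ ⊆ ⋃ i, V i := by
    intro x _
    by_cases hx : ∃ i, x ∈ F i
    · obtain ⟨i, hi⟩ := hx
      refine Set.mem_iUnion.mpr ⟨i, hV.mpr fun j hj => by_contra fun hji => ?_⟩
      exact (Set.eq_empty_iff_forall_notMem.mp (hdisj j i hji)) x ⟨hj, hi⟩
    · push Not at hx
      exact Set.mem_iUnion.mpr ⟨Classical.arbitrary ι, hV.mpr fun j hj => absurd hj (hx j)⟩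
  obtain ⟨δ, hδ, hleb⟩ := lebesgue_number_lemma_of_metric isCompact_univ hV_open hV_cover
  refine ⟨δ, hδ, fun i j x hx y hy hxy => ?_⟩
  obtain ⟨l, hl⟩ := hleb x (Set.mem_univ x)
  exact (hV.mp (hl (mem_ball_self hδ)) i hx).trans
    (hV.mp (hl (mem_ball.mpr (by rwa [dist_comm]))) j hy).symm

theorem PartitionOfUnity.dist_finsum_smul_le {ι X E : Type*} [TopologicalSpace X]
    [SeminormedAddCommGroup E] [NormedSpace ℝ E] (φ : PartitionOfUnity ι X Set.univ)
    {f : X → E} {y : ι → E} {ρ : ℝ} (h : ∀ i x, φ i x ≠ 0 → dist (y i) (f x) ≤ ρ) (x : X) :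
    dist (∑ᶠ i, φ i x • y i) (f x) ≤ ρ :=
  mem_closedBall.mp (φ.finsum_smul_mem_convex (g := fun i _ => y i) (Set.mem_univ x)
    (fun i hi => mem_closedBall.mpr (h i x hi)) (convex_closedBall _ _))

open scoped Classical in
theorem exists_partitionOfUnity_card_le {X : Type*} [MetricSpace X] {n : ℕ}
    {𝒰 : Finset (Set X)} (hopen : ∀ V ∈ 𝒰, IsOpen V) (hcover : ∀ x, ∃ V ∈ 𝒰, x ∈ V)
    (hcard : ∀ x, {V ∈ 𝒰 | x ∈ V}.card ≤ n + 1) :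
    ∃ φ : PartitionOfUnity 𝒰 X Set.univ, (∀ V x, φ V x ≠ 0 → x ∈ (V : Set X)) ∧
      ∀ x, (Finset.univ.filter (φ · x ≠ 0)).card ≤ n + 1 := by
  obtain ⟨φ, hφ⟩ := PartitionOfUnity.exists_isSubordinate isClosed_univ (fun V : 𝒰 => (V : Set X))
    (fun V => hopen V V.2) fun x _ => by
      obtain ⟨V, hV, hx⟩ := hcover x
      exact Set.mem_iUnion.mpr ⟨⟨V, hV⟩, hx⟩
  have hφ_mem : ∀ V x, φ V x ≠ 0 → x ∈ (V : Set X) := fun V x h => hφ V (subset_closure h)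
  refine ⟨φ, hφ_mem, fun x => ?_⟩
  calc (Finset.univ.filter (φ · x ≠ 0)).card
      = ((Finset.univ.filter (φ · x ≠ 0)).map (Function.Embedding.subtype (· ∈ 𝒰))).card :=
        (Finset.card_map _).symm
    _ ≤ {W ∈ 𝒰 | x ∈ W}.card := Finset.card_le_card fun W hW => by
        obtain ⟨V, hV, rfl⟩ := Finset.mem_map.mp hW
        exact Finset.mem_filter.mpr ⟨V.2, hφ_mem V x (Finset.mem_filter.mp hV).2⟩
    _ ≤ n + 1 := hcard x

/-- A common point `∑ V, φ V (a i) • y V` of the images, `a i ∈ F i`, is an affine combination of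
`y` over each of the families `{V | φ V (a i) ≠ 0}`, which are disjoint and small. -/
theorem iInter_image_sum_smul_eq_empty {X ι : Type*} [Fintype ι] {n : ℕ} {φ : ι → X → ℝ}
    (hφ : ∀ x, ∑ V, φ V x = 1) (hcard : ∀ x, (Finset.univ.filter (φ · x ≠ 0)).card ≤ n + 1)
    {y : ι → Fin (n + 1) → ℝ}
    (hy : ∀ S : Fin (n + 2) → Finset ι, (∀ i i', i ≠ i' → Disjoint (S i) (S i')) →
      (∀ i, (S i).card ≤ n + 1) → ¬ AffineHullsMeet y S)
    {F : Fin (n + 2) → Set X}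
    (hF : ∀ V i j, ∀ a ∈ F i, ∀ b ∈ F j, φ V a ≠ 0 → φ V b ≠ 0 → i = j) :
    ⋂ i, (fun x => ∑ V, φ V x • y V) '' F i = ∅ := by
  classical
  refine Set.eq_empty_iff_forall_notMem.mpr fun p hp => ?_
  choose a haF hap using fun i => Set.mem_iInter.mp hp i
  refine hy (fun i => Finset.univ.filter (φ · (a i) ≠ 0)) (fun i i' hii' => ?_)
    (fun i => hcard (a i)) ⟨fun i V => φ V (a i), p, fun i => ⟨?_, ?_⟩⟩
  · refine Finset.disjoint_left.mpr fun V hV hV' => hii' ?_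
    simp only [Finset.mem_filter, Finset.mem_univ, true_and] at hV hV'
    exact hF V i i' _ (haF i) _ (haF i') hV hV'
  · rw [Finset.sum_filter_ne_zero, hφ]
  · rw [Finset.sum_filter_of_ne fun V _ h => left_ne_zero_of_smul h]
    exact hap i

theorem dense_setOf_iInter_image_eq_empty {X : Type*} [MetricSpace X] [CompactSpace X] {n : ℕ}
    (hcov : ∀ δ > 0, ∃ (ι : Type) (U : ι → Set X) (c : ι → Fin (n + 1)), IsColoredCover U c δ)
    {F : Fin (n + 2) → Set X} (hF : ∀ i, IsClosed (F i))
    (hdisj : ∀ i j, i ≠ j → F i ∩ F j = ∅) :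
    Dense {f : C(X, Fin (n + 1) → ℝ) | ⋂ i, f '' F i = ∅} := by
  classical
  refine Metric.dense_iff.mpr fun f r hr => ?_
  obtain ⟨τ, hτ, hfτ⟩ := Metric.uniformContinuous_iff.mp
    (CompactSpace.uniformContinuous_of_continuous f.continuous) (r / 4) (by positivity)
  obtain ⟨σ, hσ, hσF⟩ := exists_pos_forall_dist_lt_imp_eq hF hdisj
  obtain ⟨ι, U, c, hU⟩ := hcov (min τ σ) (lt_min hτ hσ)
  obtain ⟨𝒰, h𝒰_open, h𝒰_cover, h𝒰_dist, h𝒰_card⟩ := hU.exists_finset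
  obtain ⟨φ, hφ_mem, hφ_card⟩ := exists_partitionOfUnity_card_le h𝒰_open h𝒰_cover h𝒰_card
  set center : 𝒰 → Fin (n + 1) → ℝ := fun V => if h : (V : Set X).Nonempty then f h.some else 0
  have hcenter : ∀ V : 𝒰, ∀ x ∈ (V : Set X), dist (center V) (f x) < r / 4 := by
    intro V x hx
    simp only [center, dif_pos (show (V : Set X).Nonempty from ⟨x, hx⟩)]
    exact hfτ ((h𝒰_dist V V.2 _ (Set.Nonempty.some_mem _) x hx).trans_le (min_le_left _ _))
  obtain ⟨y, hy_center, hy_gen⟩ :=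
    exists_forall_dist_lt_not_affineHullsMeet center (by positivity : 0 < r / 4)
  set g : C(X, Fin (n + 1) → ℝ) :=
    ⟨fun x => ∑ᶠ V, φ V x • y V, φ.continuous_finsum_smul fun _ _ _ => continuousAt_const⟩
  refine ⟨g, mem_ball.mpr ?_, ?_⟩
  · have hdist : dist g f ≤ r / 2 := (ContinuousMap.dist_le (by positivity)).mpr <|
      φ.dist_finsum_smul_le fun V x hV => by
        linarith [dist_triangle (y V) (center V) (f x), hy_center V, hcenter V x (hφ_mem V x hV)]
    linarith
  have hg : ⇑g = fun x => ∑ V, φ V x • y V := funext fun x => finsum_eq_sum_of_fintype _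
  rw [Set.mem_ofPred_eq, hg]
  refine iInter_image_sum_smul_eq_empty (fun x => ?_) hφ_card hy_gen
    fun V i j a ha b hb hVa hVb => hσF i j a ha b hb ?_
  · rw [← finsum_eq_sum_of_fintype, φ.sum_eq_one (Set.mem_univ x)]
  · exact (h𝒰_dist V V.2 a (hφ_mem V a hVa) b (hφ_mem V b hVb)).trans_le (min_le_right _ _)

/-- If `dim X ≤ n` and `F₁, …, F_{n+2}` are pairwise disjoint closed subsets of `X`, then
`{f ∈ C(X, ℝ^{n+1}) | f(F₁) ∩ ⋯ ∩ f(F_{n+2}) = ∅}` is open and dense. -/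
theorem open_dense_separating_maps (X : Type*) [MetricSpace X] [CompactSpace X] (n : ℕ)
    (hdim : topDim X (fun x y => dist x y) ≤ (n : ℕ∞))
    (F : Fin (n + 2) → Set X) (hFcl : ∀ i, IsClosed (F i))
    (hFdisj : ∀ i j, i ≠ j → F i ∩ F j = ∅) :
    IsOpen {f : C(X, Fin (n + 1) → ℝ) | ⋂ i, ⇑f '' F i = ∅} ∧
      Dense {f : C(X, Fin (n + 1) → ℝ) | ⋂ i, ⇑f '' F i = ∅} :=
  ⟨isOpen_setOf_iInter_image_eq_empty fun i => (hFcl i).isCompact,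
    dense_setOf_iInter_image_eq_empty (fun _ hδ => exists_isColoredCover_of_topDim_le hdim hδ)
      hFcl hFdisj⟩
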